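/- Let Y and f₁,…,f_K be square-integrable real random variables, and let α be in the probability simplex Δ^K. Define f_ens = ∑ₖ αₖ fₖ. Then E[(f_ens − Y)²] = ∑ₖ αₖ E[(fₖ − Y)²] − ∑ₖ αₖ E[(fₖ − f_ens)²]. -/

import Mathlib

/-!
The decomposition already holds pointwise. With `m = ∑ wᵢ xᵢ` and `∑ wᵢ = 1`,
`(xᵢ - y)² - (xᵢ - m)² = 2 xᵢ (m - y) + y² - m²`, whose `w`-average is
`2 m (m - y) + y² - m² = (m - y)²`. Integrating is legitimate because every square
involved is a square of an `L²` function, hence integrable.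
-/

open MeasureTheory

theorem Finset.sq_sum_mul_sub_eq {R ι : Type*} [CommRing R] (s : Finset ι) {w : ι → R}
    (hw : ∑ i ∈ s, w i = 1) (x : ι → R) (y : R) :
    (∑ i ∈ s, w i * x i - y) ^ 2 =
      ∑ i ∈ s, w i * (x i - y) ^ 2 - ∑ i ∈ s, w i * (x i - ∑ j ∈ s, w j * x j) ^ 2 := by
  set m := ∑ j ∈ s, w j * x j
  have hterm : ∀ i ∈ s, w i * (x i - y) ^ 2 - w i * (x i - m) ^ 2 =
      w i * x i * (2 * (m - y)) + w i * (y ^ 2 - m ^ 2) := fun i _ => by ring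
  rw [← Finset.sum_sub_distrib, Finset.sum_congr rfl hterm, Finset.sum_add_distrib,
    ← Finset.sum_mul, ← Finset.sum_mul, hw]
  ring

theorem MeasureTheory.integral_finsetSum_const_mul {Ω ι : Type*} [MeasurableSpace Ω]
    {μ : Measure Ω} (s : Finset ι) (c : ι → ℝ) {g : ι → Ω → ℝ}
    (hg : ∀ i ∈ s, Integrable (g i) μ) :
    ∫ ω, ∑ i ∈ s, c i * g i ω ∂μ = ∑ i ∈ s, c i * ∫ ω, g i ω ∂μ := by
  rw [integral_finsetSum s fun i hi => (hg i hi).const_mul (c i)]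
  simp only [integral_const_mul]

theorem MeasureTheory.MemLp.integrable_sq_sub {Ω : Type*} [MeasurableSpace Ω] {μ : Measure Ω}
    {g h : Ω → ℝ} (hg : MemLp g 2 μ) (hh : MemLp h 2 μ) :
    Integrable (fun ω => (g ω - h ω) ^ 2) μ :=
  (hg.sub hh).integrable_sq

theorem krogh_vedelsby_general {Ω : Type*} [MeasurableSpace Ω] (μ : Measure Ω)
    (K : ℕ) (Y : Ω → ℝ) (f : Fin K → Ω → ℝ)
    (hY : MemLp Y 2 μ) (hf : ∀ k, MemLp (f k) 2 μ)
    (α : Fin K → ℝ) (hsum : ∑ k, α k = 1) :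
    ∫ ω, (∑ k, α k * f k ω - Y ω) ^ 2 ∂μ =
      ∑ k, α k * ∫ ω, (f k ω - Y ω) ^ 2 ∂μ -
        ∑ k, α k * ∫ ω, (f k ω - ∑ j, α j * f j ω) ^ 2 ∂μ := by
  have hens : MemLp (fun ω => ∑ j, α j * f j ω) 2 μ :=
    memLp_finsetSum _ fun j _ => (hf j).const_mul (α j)
  have herr : ∀ k ∈ Finset.univ, Integrable (fun ω => (f k ω - Y ω) ^ 2) μ :=
    fun k _ => (hf k).integrable_sq_sub hY
  have hamb : ∀ k ∈ Finset.univ, Integrable (fun ω => (f k ω - ∑ j, α j * f j ω) ^ 2) μ :=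
    fun k _ => (hf k).integrable_sq_sub hens
  simp_rw [Finset.univ.sq_sum_mul_sub_eq hsum]
  rw [integral_sub (integrable_finsetSum _ fun k hk => (herr k hk).const_mul (α k))
      (integrable_finsetSum _ fun k hk => (hamb k hk).const_mul (α k)),
    integral_finsetSum_const_mul _ _ herr, integral_finsetSum_const_mul _ _ hamb]

theorem krogh_vedelsby {Ω : Type*} [MeasurableSpace Ω] (μ : Measure Ω)
    [IsProbabilityMeasure μ] (K : ℕ) (Y : Ω → ℝ) (f : Fin K → Ω → ℝ)
    (hY : MemLp Y 2 μ) (hf : ∀ k, MemLp (f k) 2 μ)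
    (α : Fin K → ℝ) (hα : ∀ k, 0 ≤ α k) (hsum : ∑ k, α k = 1) :
    ∫ ω, (∑ k, α k * f k ω - Y ω) ^ 2 ∂μ =
      ∑ k, α k * ∫ ω, (f k ω - Y ω) ^ 2 ∂μ -
        ∑ k, α k * ∫ ω, (f k ω - ∑ j, α j * f j ω) ^ 2 ∂μ :=
  krogh_vedelsby_general μ K Y f hY hf α hsum
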